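/- Fix T > 0, N ≥ 1, and set κ_N^T(s) := T ⌊Ns/T⌋/N. Then there is a constant C (independent of M and N) such that for all M ≥ 2, x ∈ [0,1], and t ∈ [0,T], ∫_0^t Σ_{j=1}^{M−1} e^{2λ_j^M (t−s)} |e^{λ_j^M (s − κ_N^T(s))} − 1|² ds ≤ C (T/N)^{1/2}, where λ_j^M = −j²π² c_j^M with c_j^M ∈ [4/π², 1]. -/

import Mathlib

/-!
The increment `(e^{λ(s - κ(s))} - 1)²` of the `j`-th mode is at most `min 1 (λΔ)²` with
`Δ = T/N`, since `0 ≤ s - κ(s) ≤ Δ` and `1 - e^{-x} ≤ min 1 x`; integrating the damping factor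
`e^{2λ(t-s)}` contributes `1/(2|λ|)`. As `|λ_j| ≍ j²`, the `j`-th mode costs
`≲ min (1/j²) (j²Δ²)`, and splitting the sum over `j` at `⌊Δ^{-1/2}⌋` gives `O(√Δ)` uniformly in
`M`.
-/

open Real

/-- The correction factor in the eigenvalues of the discrete Dirichlet Laplacian. -/
noncomputable def cjM (j M : ℕ) : ℝ :=
  Real.sin (j * π / (2 * M)) ^ 2 / (j * π / (2 * M)) ^ 2

/-- Eigenvalues `λ_j^M = -j²π² c_j^M` of the scaled discrete Dirichlet Laplacian. -/
noncomputable def lamJM (j M : ℕ) : ℝ := -(j : ℝ) ^ 2 * π ^ 2 * cjM j M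

/-- `κ_N^T(s) = T⌊Ns/T⌋/N`, the left endpoint of the time subinterval containing `s`. -/
noncomputable def kappaNT (T : ℝ) (N : ℕ) (s : ℝ) : ℝ :=
  T * (⌊(N : ℝ) * s / T⌋ : ℝ) / N

open Finset

lemma sin_sq_div_sq_mem_Icc {x : ℝ} (hx₀ : 0 < x) (hx : x ≤ π / 2) :
    sin x ^ 2 / x ^ 2 ∈ Set.Icc (4 / π ^ 2) 1 := by
  refine ⟨?_, div_le_one_of_le₀ sin_sq_le_sq (sq_nonneg x)⟩
  rw [le_div_iff₀ (by positivity)]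
  calc 4 / π ^ 2 * x ^ 2 = (2 / π * x) ^ 2 := by ring
    _ ≤ sin x ^ 2 := pow_le_pow_left₀ (by positivity) (mul_le_sin hx₀.le hx) 2

lemma sq_exp_sub_one_le_min {x : ℝ} (hx : x ≤ 0) : (exp x - 1) ^ 2 ≤ min 1 (x ^ 2) := by
  have hle : exp x ≤ 1 := exp_le_one_iff.2 hx
  have hge : x + 1 ≤ exp x := add_one_le_exp x
  have hpos : 0 < exp x := exp_pos x
  exact le_min (by nlinarith) (by nlinarith)

lemma integral_exp_mul_sub_le {l t : ℝ} (hl : l < 0) :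
    ∫ s in (0 : ℝ)..t, exp (l * (t - s)) ≤ (-l)⁻¹ := by
  rw [intervalIntegral.integral_comp_sub_left (fun u => exp (l * u)),
    intervalIntegral.integral_comp_mul_left _ hl.ne, integral_exp, smul_eq_mul, sub_self,
    sub_zero, mul_zero, exp_zero, ← neg_mul_neg, inv_neg, neg_sub]
  exact mul_le_of_le_one_right (neg_nonneg.2 (inv_nonpos.2 hl.le)) (by linarith [exp_pos (l * t)])

lemma intervalIntegrable_exp_mul_mul_sq_exp_mul_sub_one {l : ℝ} (hl : l ≤ 0) {δ : ℝ → ℝ}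
    (hδ : Measurable δ) (hδ₀ : ∀ s, 0 ≤ δ s) (a b t : ℝ) :
    IntervalIntegrable (fun s => exp (2 * l * (t - s)) * (exp (l * δ s) - 1) ^ 2)
      MeasureTheory.volume a b := by
  have hcont : Continuous fun s => exp (2 * l * (t - s)) := by fun_prop
  have hbound : ∀ s, ‖(exp (l * δ s) - 1) ^ 2‖ ≤ 1 := fun s => by
    rw [norm_of_nonneg (sq_nonneg _)]
    exact (sq_exp_sub_one_le_min (mul_nonpos_of_nonpos_of_nonneg hl (hδ₀ s))).trans
      (min_le_left _ _)
  have hmeas : Measurable fun s => (exp (l * δ s) - 1) ^ 2 := by fun_prop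
  exact ⟨(hcont.intervalIntegrable a b).1.mul_bdd hmeas.aestronglyMeasurable
      (MeasureTheory.ae_of_all _ hbound),
    (hcont.intervalIntegrable a b).2.mul_bdd hmeas.aestronglyMeasurable
      (MeasureTheory.ae_of_all _ hbound)⟩

lemma integral_exp_mul_mul_sq_exp_mul_sub_one_le {l t Δ : ℝ} (hl : l < 0) (ht : 0 ≤ t)
    {δ : ℝ → ℝ} (hδ : Measurable δ) (hδ₀ : ∀ s, 0 ≤ δ s) (hδΔ : ∀ s, δ s ≤ Δ) :
    ∫ s in (0 : ℝ)..t, exp (2 * l * (t - s)) * (exp (l * δ s) - 1) ^ 2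
      ≤ min 1 ((l * Δ) ^ 2) / -(2 * l) := by
  set m := min 1 ((l * Δ) ^ 2)
  have hm : 0 ≤ m := le_min zero_le_one (sq_nonneg _)
  have hpoint : ∀ s ∈ Set.Icc 0 t,
      exp (2 * l * (t - s)) * (exp (l * δ s) - 1) ^ 2 ≤ exp (2 * l * (t - s)) * m := by
    intro s _
    have hlδ : (l * δ s) ^ 2 ≤ (l * Δ) ^ 2 := by
      rw [mul_pow, mul_pow]
      gcongr
      exacts [hδ₀ s, hδΔ s]
    exact mul_le_mul_of_nonneg_left
      ((sq_exp_sub_one_le_min (mul_nonpos_of_nonpos_of_nonneg hl.le (hδ₀ s))).trans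
        (min_le_min_left 1 hlδ)) (exp_pos _).le
  calc _ ≤ ∫ s in (0 : ℝ)..t, exp (2 * l * (t - s)) * m :=
        intervalIntegral.integral_mono_on ht
          (intervalIntegrable_exp_mul_mul_sq_exp_mul_sub_one hl.le hδ hδ₀ 0 t t)
          (Continuous.intervalIntegrable (by fun_prop) 0 t) hpoint
    _ = (∫ s in (0 : ℝ)..t, exp (2 * l * (t - s))) * m := intervalIntegral.integral_mul_const _ _
    _ ≤ (-(2 * l))⁻¹ * m := mul_le_mul_of_nonneg_right (integral_exp_mul_sub_le (by linarith)) hm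
    _ = m / -(2 * l) := inv_mul_eq_div _ _

lemma sum_min_inv_sq_sq_mul_sq_le {Δ : ℝ} (hΔ : 0 < Δ) (K : ℕ) :
    ∑ j ∈ Icc 1 K, min ((j : ℝ) ^ 2)⁻¹ ((j : ℝ) ^ 2 * Δ ^ 2) ≤ 3 * √Δ := by
  set r := √Δ
  have hr : 0 < r := sqrt_pos.2 hΔ
  have hΔr : Δ = r ^ 2 := (sq_sqrt hΔ.le).symm
  set n := ⌊1 / r⌋₊
  have hn_le : (n : ℝ) * r ≤ 1 := (le_div_iff₀ hr).1 (Nat.floor_le (by positivity))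
  have hn_gt : 1 < ((n : ℝ) + 1) * r := (div_lt_iff₀ hr).1 (Nat.lt_floor_add_one _)
  rw [← sum_filter_add_sum_filter_not _ (· ≤ n)]
  have head : ∑ j ∈ (Icc 1 K).filter (· ≤ n), min ((j : ℝ) ^ 2)⁻¹ ((j : ℝ) ^ 2 * Δ ^ 2) ≤ r :=
    calc _ ≤ ∑ j ∈ (Icc 1 K).filter (· ≤ n), (n : ℝ) ^ 2 * Δ ^ 2 :=
          sum_le_sum fun j hj => min_le_of_right_le (by gcongr; exact_mod_cast (mem_filter.1 hj).2)
      _ ≤ n * ((n : ℝ) ^ 2 * Δ ^ 2) := by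
          rw [sum_const, nsmul_eq_mul]
          gcongr
          calc _ ≤ #(Icc 1 n) := card_le_card fun j hj => by
                  simp only [mem_filter, mem_Icc] at hj ⊢; omega
            _ = n := by simp
      _ = ((n : ℝ) * r) ^ 3 * r := by rw [hΔr]; ring
      _ ≤ r := mul_le_of_le_one_left hr.le (pow_le_one₀ (by positivity) hn_le)
  have tail : ∑ j ∈ (Icc 1 K).filter (¬ · ≤ n), min ((j : ℝ) ^ 2)⁻¹ ((j : ℝ) ^ 2 * Δ ^ 2)
      ≤ 2 * r :=
    calc _ ≤ ∑ j ∈ (Icc 1 K).filter (¬ · ≤ n), ((j : ℝ) ^ 2)⁻¹ :=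
          sum_le_sum fun j _ => min_le_left _ _
      _ ≤ ∑ j ∈ Ioo n (K + 1), ((j : ℝ) ^ 2)⁻¹ :=
          sum_le_sum_of_subset_of_nonneg
            (fun j hj => by simp only [mem_filter, mem_Icc, mem_Ioo] at hj ⊢; omega)
            (fun j _ _ => by positivity)
      _ ≤ 2 / (n + 1) := sum_Ioo_inv_sq_le n (K + 1)
      _ ≤ 2 * r := by rw [div_le_iff₀ (by positivity)]; nlinarith
  linarith

lemma cjM_mem_Icc {j M : ℕ} (hj : 0 < j) (hjM : j ≤ M) : cjM j M ∈ Set.Icc (4 / π ^ 2) 1 := by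
  have hM : (0 : ℝ) < M := by exact_mod_cast hj.trans_le hjM
  refine sin_sq_div_sq_mem_Icc (by positivity) ?_
  rw [div_le_div_iff₀ (by positivity) two_pos]
  have : (j : ℝ) ≤ M := by exact_mod_cast hjM
  nlinarith [pi_pos]

lemma neg_lamJM_mem_Icc {j M : ℕ} (hj : 0 < j) (hjM : j ≤ M) :
    -lamJM j M ∈ Set.Icc (4 * (j : ℝ) ^ 2) (π ^ 2 * (j : ℝ) ^ 2) := by
  obtain ⟨hc₄, hc₁⟩ := cjM_mem_Icc hj hjM
  have hπ : 0 < π ^ 2 := by positivity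
  have hc₄' : 4 ≤ π ^ 2 * cjM j M := by rwa [div_le_iff₀' hπ] at hc₄
  rw [lamJM, neg_mul, neg_mul, neg_neg]
  have hj2 : 0 ≤ (j : ℝ) ^ 2 := sq_nonneg _
  constructor
  · nlinarith
  · nlinarith [mul_le_mul_of_nonneg_left hc₁ (mul_nonneg hj2 hπ.le)]

lemma lamJM_neg {j M : ℕ} (hj : 0 < j) (hjM : j ≤ M) : lamJM j M < 0 := by
  have : (0 : ℝ) < 4 * (j : ℝ) ^ 2 := by positivity
  linarith [(neg_lamJM_mem_Icc hj hjM).1]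

lemma sub_kappaNT_eq {T : ℝ} (hT : T ≠ 0) {N : ℕ} (hN : N ≠ 0) (s : ℝ) :
    s - kappaNT T N s = T / N * Int.fract (N * s / T) := by
  have : (N : ℝ) ≠ 0 := by exact_mod_cast hN
  rw [kappaNT, Int.fract]
  field_simp

lemma sub_kappaNT_mem_Icc {T : ℝ} (hT : 0 < T) {N : ℕ} (hN : 0 < N) (s : ℝ) :
    s - kappaNT T N s ∈ Set.Icc 0 (T / N) := by
  rw [sub_kappaNT_eq hT.ne' hN.ne']
  exact ⟨mul_nonneg (by positivity) (Int.fract_nonneg _),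
    mul_le_of_le_one_right (by positivity) (Int.fract_lt_one _).le⟩

lemma measurable_kappaNT (T : ℝ) (N : ℕ) : Measurable (kappaNT T N) := by
  unfold kappaNT
  fun_prop

lemma integral_exp_lamJM_sub_kappaNT_le {T : ℝ} (hT : 0 < T) {N : ℕ} (hN : 0 < N) {j M : ℕ}
    (hj : 0 < j) (hjM : j ≤ M) {t : ℝ} (ht : 0 ≤ t) :
    ∫ s in (0 : ℝ)..t, exp (2 * lamJM j M * (t - s)) *
        (exp (lamJM j M * (s - kappaNT T N s)) - 1) ^ 2
      ≤ π ^ 2 / 2 * min ((j : ℝ) ^ 2)⁻¹ ((j : ℝ) ^ 2 * (T / N) ^ 2) := by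
  obtain ⟨ha₄, haπ⟩ := neg_lamJM_mem_Icc hj hjM
  have hj2 : (0 : ℝ) < (j : ℝ) ^ 2 := by positivity
  refine (integral_exp_mul_mul_sq_exp_mul_sub_one_le (lamJM_neg hj hjM) ht
    (measurable_id.sub (measurable_kappaNT T N)) (fun s => (sub_kappaNT_mem_Icc hT hN s).1)
    (fun s => (sub_kappaNT_mem_Icc hT hN s).2)).trans ?_
  rw [← min_div_div_right (by linarith), mul_min_of_nonneg _ _ (by positivity)]
  set a := -lamJM j M
  rw [show lamJM j M = -a from (neg_neg _).symm]
  have ha : 0 < a := by linarith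
  apply min_le_min
  · rw [div_le_iff₀ (by linarith)]
    field_simp
    nlinarith [pi_gt_three]
  · rw [div_le_iff₀ (by linarith)]
    field_simp
    nlinarith [pi_gt_three]

theorem kernel_time_discretization_estimate (T : ℝ) (hT : 0 < T) :
    ∃ C > 0, ∀ N : ℕ, 1 ≤ N → ∀ M : ℕ, 2 ≤ M → ∀ x : ℝ, x ∈ Set.Icc (0:ℝ) 1 →
      ∀ t : ℝ, t ∈ Set.Icc 0 T →
      (∫ s in (0:ℝ)..t, ∑ j ∈ Finset.Icc 1 (M - 1),
          Real.exp (2 * lamJM j M * (t - s)) *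
            (Real.exp (lamJM j M * (s - kappaNT T N s)) - 1) ^ 2) ≤
        C * (T / N) ^ ((1:ℝ)/2) := by
  refine ⟨3 * π ^ 2 / 2, by positivity, ?_⟩
  rintro N hN M - x - t ⟨ht, -⟩
  have hΔ : 0 < T / N := div_pos hT (by exact_mod_cast hN)
  have hjM : ∀ j ∈ Icc 1 (M - 1), 0 < j ∧ j ≤ M := fun j hj => by
    rw [mem_Icc] at hj; omega
  calc _ = ∑ j ∈ Icc 1 (M - 1), ∫ s in (0 : ℝ)..t, exp (2 * lamJM j M * (t - s)) *
          (exp (lamJM j M * (s - kappaNT T N s)) - 1) ^ 2 :=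
        intervalIntegral.integral_finsetSum fun j hj =>
          intervalIntegrable_exp_mul_mul_sq_exp_mul_sub_one
            (lamJM_neg (hjM j hj).1 (hjM j hj).2).le
            (measurable_id.sub (measurable_kappaNT T N))
            (fun s => (sub_kappaNT_mem_Icc hT hN s).1) 0 t t
    _ ≤ ∑ j ∈ Icc 1 (M - 1), π ^ 2 / 2 * min ((j : ℝ) ^ 2)⁻¹ ((j : ℝ) ^ 2 * (T / N) ^ 2) :=
        sum_le_sum fun j hj =>
          integral_exp_lamJM_sub_kappaNT_le hT hN (hjM j hj).1 (hjM j hj).2 ht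
    _ = π ^ 2 / 2 * ∑ j ∈ Icc 1 (M - 1), min ((j : ℝ) ^ 2)⁻¹ ((j : ℝ) ^ 2 * (T / N) ^ 2) :=
        (mul_sum _ _ _).symm
    _ ≤ π ^ 2 / 2 * (3 * √(T / N)) := by gcongr; exact sum_min_inv_sq_sq_mul_sq_le hΔ _
    _ = 3 * π ^ 2 / 2 * (T / N) ^ ((1 : ℝ) / 2) := by rw [sqrt_eq_rpow]; ring
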